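/- Let τ_0, τ_1, τ_2, z ∈ ℂ with Im(τ_0) > 0, Im(τ_2) < 0, and τ_1 a real quadratic irrational (so Im(τ_1) = 0), and suppose Im(τ_2) < Im(z) < Im(τ_0). Then the series Σ_{j=1}^∞ cos(πj(2z − τ_0 − τ_1 − τ_2)) / (j · sin(πjτ_0) · sin(πjτ_1) · sin(πjτ_2)) is absolutely convergent, i.e. the function j ↦ cos(πj(2z − τ_0 − τ_1 − τ_2)) / (j · sin(πjτ_0) · sin(πjτ_1) · sin(πjτ_2)) on positive integers is summable. -/

import Mathlib

/-!
For `Im τ ≠ 0` the norm `‖sin (π j τ)‖ ≥ sinh (π j |Im τ|)` grows like `exp (π j |Im τ|)`, while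
`‖cos (π j w)‖ ≤ exp (π j |Im w|)`. For the real quadratic irrational `τ₁`, Liouville's theorem gives
`|j τ₁ - m| ≫ 1 / j`, hence `|sin (π j τ₁)| ≫ 1 / j` by Jordan's inequality. Since
`|Im (2z - τ₀ - τ₁ - τ₂)| < Im τ₀ - Im τ₂`, the terms are dominated by a convergent geometric series.
-/

open scoped Real
open Polynomial

/-- The `j`-th term (`j ≥ 1`) of the trigonometric series for `G_2`:
`cos(πj(2z - τ₀ - τ₁ - τ₂)) / (j sin(πjτ₀) sin(πjτ₁) sin(πjτ₂))`. -/
noncomputable def g2TrigTerm (z τ₀ τ₁ τ₂ : ℂ) (j : ℕ) : ℂ :=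
  Complex.cos ((π : ℂ) * j * (2 * z - τ₀ - τ₁ - τ₂)) /
    ((j : ℂ) * Complex.sin ((π : ℂ) * j * τ₀) * Complex.sin ((π : ℂ) * j * τ₁) *
      Complex.sin ((π : ℂ) * j * τ₂))

theorem Irrational.exists_pos_one_le_mul_pow_mul_abs_nat_mul_sub_int {α : ℝ} (hα : Irrational α)
    {p : ℚ[X]} (hp : p ≠ 0) (hpα : aeval α p = 0) :
    ∃ A : ℝ, 0 < A ∧ ∀ (n : ℕ) (m : ℤ), 0 < n →
      1 ≤ A * (n : ℝ) ^ (p.natDegree - 1) * |n * α - m| := by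
  set f : ℤ[X] := IsLocalization.integerNormalization (nonZeroDivisors ℤ) p
  have hf : f ≠ 0 := by
    rwa [Ne, IsFractionRing.integerNormalization_eq_zero_iff]
  have hfα : eval α (f.map (algebraMap ℤ ℝ)) = 0 := by
    rw [eval_map_algebraMap]
    exact IsLocalization.integerNormalization_aeval_eq_zero _ p hpα
  have hfp : f.natDegree ≤ p.natDegree :=
    natDegree_le_natDegree (degree_mono (IsLocalization.integerNormalization_support _ p))
  have hp₀ : 0 < p.natDegree :=
    natDegree_pos_of_aeval_root hp hpα fun x hx => by simpa using hx
  obtain ⟨A, hA, hLiouville⟩ := Liouville.exists_pos_real_of_irrational_root hα hf hfα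
  refine ⟨A, hA, fun n m hn => ?_⟩
  obtain ⟨b, rfl⟩ : ∃ b, n = b + 1 := ⟨n - 1, by omega⟩
  push_cast
  have hb : (0 : ℝ) < b + 1 := by positivity
  calc (1 : ℝ) ≤ ((b : ℝ) + 1) ^ f.natDegree * (|α - m / (b + 1)| * A) := hLiouville m b
    _ ≤ ((b : ℝ) + 1) ^ p.natDegree * (|α - m / (b + 1)| * A) := by
      gcongr
      linarith
    _ = A * ((b : ℝ) + 1) ^ (p.natDegree - 1) * (|(b + 1 : ℝ)| * |α - m / (b + 1)|) := by
      rw [abs_of_pos hb, ← pow_sub_one_mul hp₀.ne']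
      ring
    _ = _ := by
      rw [← abs_mul, mul_sub, mul_div_cancel₀ _ hb.ne']

theorem Real.two_mul_abs_sub_round_le_abs_sin_pi_mul (x : ℝ) :
    2 * |x - round x| ≤ |sin (π * x)| := by
  have hsin : |sin (π * x)| = |sin (π * (x - round x))| := by
    rw [mul_sub, mul_comm π (round x : ℝ), sin_sub_int_mul_pi, abs_mul, abs_neg_one_zpow, one_mul]
  have hround : |π * (x - round x)| ≤ π / 2 := by
    rw [abs_mul, abs_of_pos pi_pos]
    nlinarith [abs_sub_round x, pi_pos]
  rw [hsin]
  convert mul_abs_le_abs_sin hround using 1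
  rw [abs_mul, abs_of_pos pi_pos]
  field_simp

theorem Real.mul_exp_le_sinh {s t : ℝ} (hst : s ≤ t) :
    (1 - exp (-(2 * s))) / 2 * exp t ≤ sinh t := by
  have : exp (-(2 * t)) ≤ exp (-(2 * s)) := exp_le_exp.2 (by linarith)
  rw [sinh_eq, show -t = -(2 * t) + t by ring, exp_add]
  nlinarith [exp_pos t]

theorem Complex.sq_norm_sin (w : ℂ) : ‖sin w‖ ^ 2 = Real.sin w.re ^ 2 + Real.sinh w.im ^ 2 := by
  have h : sin w = ((Real.sin w.re * Real.cosh w.im : ℝ) : ℂ) +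
      ((Real.cos w.re * Real.sinh w.im : ℝ) : ℂ) * I := by
    rw [sin_eq]; push_cast; ring
  rw [h, Complex.sq_norm, normSq_add_mul_I, mul_pow, mul_pow, Real.cosh_sq]
  nlinarith [Real.sin_sq_add_cos_sq w.re]

theorem Complex.sq_norm_cos (w : ℂ) : ‖cos w‖ ^ 2 = Real.cos w.re ^ 2 + Real.sinh w.im ^ 2 := by
  have h : cos w = ((Real.cos w.re * Real.cosh w.im : ℝ) : ℂ) +
      ((-(Real.sin w.re * Real.sinh w.im) : ℝ) : ℂ) * I := by
    rw [cos_eq]; push_cast; ring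
  rw [h, Complex.sq_norm, normSq_add_mul_I, neg_sq, mul_pow, mul_pow, Real.cosh_sq]
  nlinarith [Real.sin_sq_add_cos_sq w.re]

theorem Complex.sinh_abs_im_le_norm_sin (w : ℂ) : Real.sinh |w.im| ≤ ‖sin w‖ := by
  rw [← sq_le_sq₀ (Real.sinh_nonneg_iff.2 (abs_nonneg _)) (norm_nonneg _), sq_norm_sin,
    ← Real.abs_sinh, sq_abs]
  nlinarith [sq_nonneg (Real.sin w.re)]

theorem Complex.norm_cos_le_cosh_im (w : ℂ) : ‖cos w‖ ≤ Real.cosh w.im := by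
  rw [← sq_le_sq₀ (norm_nonneg _) (Real.cosh_pos _).le, sq_norm_cos, Real.cosh_sq]
  nlinarith [Real.cos_sq_le_one w.re]

theorem Real.cosh_le_exp_abs (x : ℝ) : cosh x ≤ exp |x| := by
  rw [← cosh_abs, cosh_eq]
  nlinarith [exp_le_exp.2 (show -|x| ≤ |x| by linarith [abs_nonneg x])]

theorem Irrational.exists_pos_one_le_mul_pow_mul_abs_sin_pi_nat_mul {α : ℝ} (hα : Irrational α)
    {p : ℚ[X]} (hp : p ≠ 0) (hpα : aeval α p = 0) :
    ∃ B : ℝ, 0 < B ∧ ∀ n : ℕ, 0 < n →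
      1 ≤ B * (n : ℝ) ^ (p.natDegree - 1) * |Real.sin (π * n * α)| := by
  obtain ⟨A, hA, hLiouville⟩ := hα.exists_pos_one_le_mul_pow_mul_abs_nat_mul_sub_int hp hpα
  refine ⟨A / 2, half_pos hA, fun n hn => ?_⟩
  calc (1 : ℝ) ≤ A * (n : ℝ) ^ (p.natDegree - 1) * |n * α - round (n * α)| :=
        hLiouville n _ hn
    _ ≤ A / 2 * (n : ℝ) ^ (p.natDegree - 1) * |Real.sin (π * n * α)| := by
      rw [mul_assoc π]
      nlinarith [Real.two_mul_abs_sub_round_le_abs_sin_pi_mul (n * α),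
        mul_pos hA (pow_pos (Nat.cast_pos.2 hn) (p.natDegree - 1))]

theorem Complex.im_pi_mul_natCast_mul (n : ℕ) (w : ℂ) : ((π : ℂ) * n * w).im = π * n * w.im := by
  simp

theorem Complex.exists_pos_mul_exp_le_norm_sin_pi_nat_mul {τ : ℂ} (hτ : τ.im ≠ 0) :
    ∃ c : ℝ, 0 < c ∧ ∀ n : ℕ, 0 < n →
      c * Real.exp (n * (π * |τ.im|)) ≤ ‖sin (π * n * τ)‖ := by
  have hs : 0 < π * |τ.im| := mul_pos Real.pi_pos (abs_pos.2 hτ)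
  refine ⟨(1 - Real.exp (-(2 * (π * |τ.im|)))) / 2, ?_, fun n hn => ?_⟩
  · linarith [Real.exp_lt_one_iff.2 (show -(2 * (π * |τ.im|)) < 0 by linarith)]
  · have hst : π * |τ.im| ≤ n * (π * |τ.im|) :=
      le_mul_of_one_le_left hs.le (by exact_mod_cast hn)
    have him : |((π : ℂ) * n * τ).im| = n * (π * |τ.im|) := by
      rw [im_pi_mul_natCast_mul, abs_mul, abs_mul, Nat.abs_cast, abs_of_pos Real.pi_pos]
      ring
    exact (Real.mul_exp_le_sinh hst).trans (him ▸ sinh_abs_im_le_norm_sin _)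

theorem norm_g2TrigTerm_le {z τ₀ τ₁ τ₂ : ℂ} {n : ℕ} (hn : 0 < n) {c₀ c₂ B : ℝ}
    (hc₀ : 0 < c₀) (hc₂ : 0 < c₂) (hB : 0 < B)
    (h₀ : c₀ * Real.exp (n * (π * |τ₀.im|)) ≤ ‖Complex.sin (π * n * τ₀)‖)
    (h₁ : (B * n)⁻¹ ≤ ‖Complex.sin (π * n * τ₁)‖)
    (h₂ : c₂ * Real.exp (n * (π * |τ₂.im|)) ≤ ‖Complex.sin (π * n * τ₂)‖) :
    ‖g2TrigTerm z τ₀ τ₁ τ₂ n‖ ≤ B / (c₀ * c₂) *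
      Real.exp (π * (|(2 * z - τ₀ - τ₁ - τ₂).im| - |τ₀.im| - |τ₂.im|)) ^ n := by
  set w := 2 * z - τ₀ - τ₁ - τ₂
  have hn' : (0 : ℝ) < n := Nat.cast_pos.2 hn
  have hcos : ‖Complex.cos (π * n * w)‖ ≤ Real.exp (n * (π * |w.im|)) := by
    refine (Complex.norm_cos_le_cosh_im _).trans ((Real.cosh_le_exp_abs _).trans_eq ?_)
    rw [Complex.im_pi_mul_natCast_mul, abs_mul, abs_mul, Nat.abs_cast, abs_of_pos Real.pi_pos]
    ring_nf
  rw [g2TrigTerm, norm_div, norm_mul, norm_mul, norm_mul, Complex.norm_natCast]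
  calc
    _ ≤ Real.exp (n * (π * |w.im|)) / (n * (c₀ * Real.exp (n * (π * |τ₀.im|))) * (B * n)⁻¹ *
        (c₂ * Real.exp (n * (π * |τ₂.im|)))) := by
      gcongr
    _ = _ := by
      rw [← Real.exp_nat_mul]
      simp only [mul_sub, Real.exp_sub]
      field_simp

/-- Let `Im τ₀ > 0`, `Im τ₂ < 0`, let `τ₁` be a real quadratic
irrational (so `Im τ₁ = 0`), and suppose `Im τ₂ < Im z < Im τ₀`. Then the series
`Σ_{j ≥ 1} cos(πj(2z - τ₀ - τ₁ - τ₂)) / (j sin(πjτ₀) sin(πjτ₁) sin(πjτ₂))` is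
absolutely convergent. -/
theorem statement10
    (z τ₀ τ₁ τ₂ : ℂ)
    (h0 : 0 < τ₀.im) (h2 : τ₂.im < 0)
    (h1im : τ₁.im = 0)
    (h1irr : Irrational τ₁.re)
    (h1deg : ∃ p : Polynomial ℚ, p ≠ 0 ∧ p.degree = 2 ∧ Polynomial.aeval τ₁.re p = 0)
    (hz : τ₂.im < z.im ∧ z.im < τ₀.im) :
    Summable (fun j : ℕ => ‖g2TrigTerm z τ₀ τ₁ τ₂ (j + 1)‖) := by
  obtain ⟨c₀, hc₀, hsin₀⟩ := Complex.exists_pos_mul_exp_le_norm_sin_pi_nat_mul h0.ne'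
  obtain ⟨c₂, hc₂, hsin₂⟩ := Complex.exists_pos_mul_exp_le_norm_sin_pi_nat_mul h2.ne
  obtain ⟨p, hp, hpdeg, hpτ₁⟩ := h1deg
  obtain ⟨B, hB, hsin₁⟩ := h1irr.exists_pos_one_le_mul_pow_mul_abs_sin_pi_nat_mul hp hpτ₁
  rw [natDegree_eq_of_degree_eq_some hpdeg] at hsin₁
  have hτ₁ : τ₁ = (τ₁.re : ℂ) := Complex.ext rfl (by simp [h1im])
  have hsin₁' (n : ℕ) (hn : 0 < n) : (B * n)⁻¹ ≤ ‖Complex.sin (π * n * τ₁)‖ := by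
    rw [hτ₁, ← Complex.ofReal_natCast, ← Complex.ofReal_mul, ← Complex.ofReal_mul,
      ← Complex.ofReal_sin, Complex.norm_real, Real.norm_eq_abs,
      inv_le_iff_one_le_mul₀ (by positivity)]
    linarith [pow_one (n : ℝ) ▸ hsin₁ n hn]
  have hr : Real.exp (π * (|(2 * z - τ₀ - τ₁ - τ₂).im| - |τ₀.im| - |τ₂.im|)) < 1 := by
    have him : (2 * z - τ₀ - τ₁ - τ₂).im = 2 * z.im - τ₀.im - τ₂.im := by simp [h1im]
    have hw : |2 * z.im - τ₀.im - τ₂.im| < τ₀.im - τ₂.im := abs_lt.2 ⟨by linarith, by linarith⟩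
    rw [Real.exp_lt_one_iff, him, abs_of_pos h0, abs_of_neg h2]
    exact mul_neg_of_pos_of_neg Real.pi_pos (by linarith)
  refine .of_nonneg_of_le (fun _ => norm_nonneg _)
    (fun j => norm_g2TrigTerm_le j.succ_pos hc₀ hc₂ hB (hsin₀ _ j.succ_pos) (hsin₁' _ j.succ_pos)
      (hsin₂ _ j.succ_pos))
    ((summable_nat_add_iff 1).2 ((summable_geometric_of_lt_one (Real.exp_pos _).le hr).mul_left _))
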